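/- Let (λ_k)_{k∈ℕ} be a sequence of positive real numbers, β > 0, and μ a real number with μ < √λ_k for every k. Assume the series Σ_k 1/(exp(β(√λ_k − μ)) + 1) converges. Then Σ_k 1/(exp(β(√λ_k − μ)) + 1) = ∫₀^∞ h_f(t, βμ) · (Σ_k exp(−t β² λ_k)) dt, where h_f(t,a) = (4π)^{-1/2} t^{-3/2} Σ_{j=1}^∞ (−1)^{j+1} j · exp(−j²/(4t) + j·a). (Heat-trace representation of the fermionic quantum heat trace Θ_f(β,μ).) -/

import Mathlib

open MeasureTheory

/-- The fermionic subordination kernel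
`h_f(t,a) = (4π)^{-1/2} t^{-3/2} Σ_{j≥1} (−1)^{j+1} j e^{−j²/(4t)+j a}`. -/
noncomputable def fermionicKernel (t a : ℝ) : ℝ :=
  (4 * Real.pi) ^ (-(1 : ℝ) / 2) * t ^ (-(3 : ℝ) / 2) *
    ∑' j : ℕ, (-1 : ℝ) ^ j * ((j : ℝ) + 1) *
      Real.exp (-((j : ℝ) + 1) ^ 2 / (4 * t) + ((j : ℝ) + 1) * a)

open MeasureTheory Real Set Filter Topology

lemma glasser_integrable {a : ℝ} (ha : 0 < a) :
    IntegrableOn (fun x => Real.exp (-(x - a/x)^2)) (Ioi 0) := by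
  have h : Integrable (fun x : ℝ => Real.exp (2*a) * Real.exp (-1 * x^2)) :=
    (integrable_exp_neg_mul_sq one_pos).const_mul _
  refine (h.integrableOn.mono' ?_ ?_)
  · exact ((by fun_prop : Measurable fun x:ℝ => Real.exp (-(x - a/x)^2)).aestronglyMeasurable).restrict
  · filter_upwards [ae_restrict_mem measurableSet_Ioi] with x hx
    rw [Real.norm_eq_abs, abs_of_pos (Real.exp_pos _), ← Real.exp_add]
    apply Real.exp_le_exp.2
    have hx0 : (0:ℝ) < x := hx
    have h2 : (a/x)^2 ≥ 0 := sq_nonneg _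
    have : (x - a/x)^2 = x^2 - 2*a + (a/x)^2 := by
      field_simp; ring
    nlinarith

lemma inv_image_Ioi {a : ℝ} (ha : 0 < a) : (fun x => a / x) '' (Ioi (0:ℝ)) = Ioi (0:ℝ) := by
  ext y
  constructor
  · rintro ⟨x, hx, rfl⟩
    exact div_pos ha hx
  · intro hy
    exact ⟨a / y, div_pos ha hy, by field_simp⟩

lemma inv_hasDeriv {a : ℝ} : ∀ x ∈ Ioi (0:ℝ),
    HasDerivWithinAt (fun x => a / x) (-(a / x^2)) (Ioi 0) x := by
  intro x hx
  have : HasDerivAt (fun x:ℝ => a / x) (-(a / x^2)) x := by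
    simpa [div_eq_mul_inv, mul_comm] using
      ((hasDerivAt_inv (ne_of_gt (mem_Ioi.1 hx))).const_mul a)
  exact this.hasDerivWithinAt

lemma inv_injOn {a : ℝ} (ha : 0 < a) : InjOn (fun x => a / x) (Ioi 0) := by
  intro x hx y hy h
  have hx0 : x ≠ 0 := ne_of_gt (mem_Ioi.1 hx)
  have hy0 : y ≠ 0 := ne_of_gt (mem_Ioi.1 hy)
  field_simp at h
  exact h.symm

lemma glasser_reflect_aux {a : ℝ} (ha : 0 < a) (x : ℝ) (hx : x ∈ Ioi (0:ℝ)) :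
    |(-(a / x^2))| • Real.exp (-((a/x) - a/(a/x))^2) = (a/x^2) * Real.exp (-(x - a/x)^2) := by
  have hx0 : (0:ℝ) < x := hx
  have h1 : a / (a/x) = x := by field_simp
  have h2 : |(-(a / x^2))| = a / x^2 := by
    rw [abs_neg, abs_of_pos (div_pos ha (by positivity))]
  rw [h1, h2, smul_eq_mul]
  congr 1
  rw [← neg_sub x (a/x), neg_sq]

lemma glasser_reflect {a : ℝ} (ha : 0 < a) :
    ∫ x in Ioi (0:ℝ), (a/x^2) * Real.exp (-(x - a/x)^2)
      = ∫ x in Ioi (0:ℝ), Real.exp (-(x - a/x)^2) := by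
  have := integral_image_eq_integral_abs_deriv_smul measurableSet_Ioi (inv_hasDeriv (a := a))
    (inv_injOn ha) (fun y => Real.exp (-(y - a/y)^2))
  rw [inv_image_Ioi ha] at this
  rw [this]
  exact (setIntegral_congr_fun measurableSet_Ioi (fun x hx => glasser_reflect_aux ha x hx)).symm

lemma glasser_reflect_integrable {a : ℝ} (ha : 0 < a) :
    IntegrableOn (fun x => (a/x^2) * Real.exp (-(x - a/x)^2)) (Ioi (0:ℝ)) := by
  have := (integrableOn_image_iff_integrableOn_abs_deriv_smul measurableSet_Ioi
    (inv_hasDeriv (a := a)) (inv_injOn ha) (fun y => Real.exp (-(y - a/y)^2)))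
  rw [inv_image_Ioi ha] at this
  have h2 := this.1 (glasser_integrable ha)
  exact h2.congr_fun (fun x hx => glasser_reflect_aux ha x hx) measurableSet_Ioi

lemma psi_image {a : ℝ} (ha : 0 < a) : (fun x => x - a / x) '' (Ioi 0) = univ := by
  apply eq_univ_of_forall
  intro u
  have hs : (0:ℝ) < Real.sqrt (u^2 + 4*a) := Real.sqrt_pos.2 (by nlinarith)
  set s := Real.sqrt (u^2 + 4*a) with hsdef
  have hs2 : s^2 = u^2 + 4*a := Real.sq_sqrt (by nlinarith)
  have hsu : |u| < s := by
    rw [← Real.sqrt_sq_eq_abs]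
    exact Real.sqrt_lt_sqrt (sq_nonneg u) (by nlinarith)
  have hx : (0:ℝ) < (u + s) / 2 := by
    have := neg_abs_le u
    linarith [abs_le.1 hsu.le]
  refine ⟨(u + s)/2, hx, ?_⟩
  have hxne : (u+s)/2 ≠ 0 := ne_of_gt hx
  have h3 : a / ((u+s)/2) = (u+s)/2 - u := by
    rw [div_eq_iff hxne]; nlinarith
  simp only
  rw [h3]; ring

lemma psi_hasDeriv {a : ℝ} : ∀ x ∈ Ioi (0:ℝ),
    HasDerivWithinAt (fun x => x - a / x) (1 + a / x^2) (Ioi 0) x := by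
  intro x hx
  have h1 : HasDerivAt (fun x:ℝ => a / x) (-(a / x^2)) x := by
    simpa [div_eq_mul_inv, mul_comm] using
      ((hasDerivAt_inv (ne_of_gt (mem_Ioi.1 hx))).const_mul a)
  have := ((hasDerivAt_id' x).sub h1).hasDerivWithinAt (s := Ioi 0)
  exact this.congr_deriv (by ring)

lemma psi_injOn {a : ℝ} (ha : 0 < a) : InjOn (fun x => x - a / x) (Ioi 0) := by
  apply StrictMonoOn.injOn
  intro x hx y hy hxy
  have hx0 : (0:ℝ) < x := hx
  have hy0 : (0:ℝ) < y := hy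
  have : a / y < a / x := div_lt_div_of_pos_left ha hx0 hxy
  simp only
  linarith

lemma glasser_sum {a : ℝ} (ha : 0 < a) :
    ∫ x in Ioi (0:ℝ), (1 + a/x^2) * Real.exp (-(x - a/x)^2) = Real.sqrt π := by
  have := integral_image_eq_integral_abs_deriv_smul measurableSet_Ioi (psi_hasDeriv (a := a))
    (psi_injOn ha) (fun u => Real.exp (-u^2))
  rw [psi_image ha] at this
  have hg : ∫ u in (univ : Set ℝ), Real.exp (-u^2) = Real.sqrt π := by
    rw [setIntegral_univ]
    simpa using integral_gaussian 1
  rw [← hg, this]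
  refine setIntegral_congr_fun measurableSet_Ioi (fun x hx => ?_)
  have hx0 : (0:ℝ) < x := hx
  have h2 : |1 + a / x^2| = 1 + a/x^2 := abs_of_pos (by positivity)
  rw [h2, smul_eq_mul]

lemma glasser {a : ℝ} (ha : 0 < a) :
    ∫ x in Ioi (0:ℝ), Real.exp (-(x - a/x)^2) = Real.sqrt π / 2 := by
  have hsplit : ∫ x in Ioi (0:ℝ), (1 + a/x^2) * Real.exp (-(x - a/x)^2)
      = (∫ x in Ioi (0:ℝ), Real.exp (-(x - a/x)^2))
        + ∫ x in Ioi (0:ℝ), (a/x^2) * Real.exp (-(x - a/x)^2) := by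
    rw [← integral_add (glasser_integrable ha) (glasser_reflect_integrable ha)]
    refine setIntegral_congr_fun measurableSet_Ioi (fun x hx => ?_)
    ring
  have h := glasser_sum ha
  rw [hsplit, glasser_reflect ha] at h
  linarith

lemma glasser' {b : ℝ} (hb : 0 < b) :
    ∫ x in Ioi (0:ℝ), Real.exp (-x^2 - b^2/x^2)
      = Real.sqrt π / 2 * Real.exp (-(2*b)) := by
  have key : ∀ x ∈ Ioi (0:ℝ), Real.exp (-(x - b/x)^2)
      = Real.exp (2*b) * Real.exp (-x^2 - b^2/x^2) := by
    intro x hx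
    have hx0 : (0:ℝ) < x := hx
    rw [← Real.exp_add]
    congr 1
    have : (x - b/x)^2 = x^2 - 2*b + b^2/x^2 := by field_simp; ring
    rw [this]; ring
  have h := glasser hb
  rw [setIntegral_congr_fun measurableSet_Ioi key, integral_const_mul] at h
  have he := Real.exp_pos (2*b)
  rw [Real.exp_neg]
  field_simp at h ⊢
  linarith

lemma glasser'_integrable {b : ℝ} (hb : 0 < b) :
    IntegrableOn (fun x => Real.exp (-x^2 - b^2/x^2)) (Ioi (0:ℝ)) := by
  have h2 : IntegrableOn (fun x => Real.exp (-(2*b)) * Real.exp (-(x - b/x)^2)) (Ioi (0:ℝ)) :=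
    (glasser_integrable hb).const_mul (Real.exp (-(2*b)))
  refine h2.congr_fun (fun x hx => ?_) measurableSet_Ioi
  have hx0 : (0:ℝ) < x := hx
  beta_reduce
  rw [← Real.exp_add]
  congr 1
  have : (x - b/x)^2 = x^2 - 2*b + b^2/x^2 := by field_simp; ring
  rw [this]; ring

section Subordination

variable {a c : ℝ}

lemma sub_image (ha : 0 < a) : (fun x => a^2 / (4 * x^2)) '' (Ioi (0:ℝ)) = Ioi (0:ℝ) := by
  ext y
  constructor
  · rintro ⟨x, hx, rfl⟩
    have hx0 : (0:ℝ) < x := hx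
    exact div_pos (pow_pos ha 2) (by positivity)
  · intro hy
    have hy0 : (0:ℝ) < y := hy
    refine ⟨a / (2 * Real.sqrt y), mem_Ioi.2 (by positivity), ?_⟩
    have hs : Real.sqrt y ^ 2 = y := Real.sq_sqrt hy0.le
    have hs0 : (0:ℝ) < Real.sqrt y := Real.sqrt_pos.2 hy0
    field_simp
    nlinarith

lemma sub_hasDeriv : ∀ x ∈ Ioi (0:ℝ),
    HasDerivWithinAt (fun x => a^2 / (4 * x^2)) (-(a^2 / (2 * x^3))) (Ioi 0) x := by
  intro x hx
  have hx0 : (0:ℝ) < x := hx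
  have h1 : HasDerivAt (fun x:ℝ => x^2) (2*x) x := by
    simpa using hasDerivAt_pow 2 x
  have h2 : HasDerivAt (fun x:ℝ => (x^2)⁻¹) (-(2*x) / (x^2)^2) x :=
    h1.inv (by positivity)
  have h3 : HasDerivAt (fun x:ℝ => a^2/4 * (x^2)⁻¹) (a^2/4 * (-(2*x) / (x^2)^2)) x :=
    h2.const_mul _
  have heq : (fun x:ℝ => a^2/(4*x^2)) = fun x:ℝ => a^2/4 * (x^2)⁻¹ := by
    funext y
    rw [div_eq_mul_inv, mul_inv]
    ring
  have h4 : a^2/4 * (-(2*x) / (x^2)^2) = -(a^2 / (2 * x^3)) := by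
    field_simp
    ring
  rw [heq, ← h4]
  exact h3.hasDerivWithinAt

lemma sub_injOn (ha : 0 < a) : InjOn (fun x => a^2 / (4 * x^2)) (Ioi 0) := by
  intro x hx y hy h
  have hx0 : (0:ℝ) < x := hx
  have hy0 : (0:ℝ) < y := hy
  simp only at h
  have ha2 : (0:ℝ) < a^2 := by positivity
  have h4x : (0:ℝ) < 4 * x^2 := by positivity
  have h4y : (0:ℝ) < 4 * y^2 := by positivity
  field_simp at h
  nlinarith [sq_nonneg (x - y), sq_nonneg (x + y)]

end Subordination

lemma sub_key {a c : ℝ} (ha : 0 < a) (x : ℝ) (hx : x ∈ Ioi (0:ℝ)) :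
    |(-(a^2 / (2 * x^3)))| •
      ((a^2/(4*x^2)) ^ (-(3:ℝ)/2) * Real.exp (-(a^2/(4*(a^2/(4*x^2)))) - c^2*(a^2/(4*x^2))))
    = (4/a) * Real.exp (-x^2 - (a*c/2)^2/x^2) := by
  have hx0 : (0:ℝ) < x := hx
  have hy : (0:ℝ) < a / (2*x) := by positivity
  have habs : |(-(a^2 / (2 * x^3)))| = a^2 / (2 * x^3) := by
    rw [abs_neg, abs_of_pos (by positivity)]
  have hbase : a^2/(4*x^2) = (a/(2*x))^2 := by field_simp; ring
  have hpow : ((a/(2*x))^2 : ℝ) ^ (-(3:ℝ)/2) = (2*x/a)^3 := by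
    rw [← Real.rpow_natCast (a/(2*x)) 2, ← Real.rpow_mul hy.le]
    norm_num
    rw [← inv_pow, inv_div]
  have hexp : -(a^2/(4*(a^2/(4*x^2)))) - c^2*(a^2/(4*x^2)) = -x^2 - (a*c/2)^2/x^2 := by
    field_simp
    ring
  rw [habs, hexp, hbase, hpow, smul_eq_mul, ← mul_assoc]
  congr 1
  field_simp
  ring

lemma subordination {a c : ℝ} (ha : 0 < a) (hc : 0 < c) :
    ∫ t in Ioi (0:ℝ), t ^ (-(3:ℝ)/2) * Real.exp (-(a^2/(4*t)) - c^2*t)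
      = 2 * Real.sqrt π / a * Real.exp (-(a*c)) := by
  have him := sub_image ha
  have h := integral_image_eq_integral_abs_deriv_smul measurableSet_Ioi
    (sub_hasDeriv (a := a)) (sub_injOn ha)
    (fun t => t ^ (-(3:ℝ)/2) * Real.exp (-(a^2/(4*t)) - c^2*t))
  rw [him] at h
  rw [h, setIntegral_congr_fun measurableSet_Ioi (fun x hx => sub_key ha x hx),
    integral_const_mul]
  have hb : (0:ℝ) < a*c/2 := by positivity
  rw [glasser' hb]
  rw [show -(2*(a*c/2)) = -(a*c) by ring]
  field_simp
  ring

lemma subordination_integrable {a c : ℝ} (ha : 0 < a) (hc : 0 < c) :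
    IntegrableOn (fun t => t ^ (-(3:ℝ)/2) * Real.exp (-(a^2/(4*t)) - c^2*t)) (Ioi (0:ℝ)) := by
  have him := sub_image ha
  have hiff := integrableOn_image_iff_integrableOn_abs_deriv_smul measurableSet_Ioi
    (sub_hasDeriv (a := a)) (sub_injOn ha)
    (fun t => t ^ (-(3:ℝ)/2) * Real.exp (-(a^2/(4*t)) - c^2*t))
  rw [him] at hiff
  refine hiff.2 ?_
  have hb : (0:ℝ) < a*c/2 := by positivity
  have hint : IntegrableOn (fun x => (4/a) * Real.exp (-x^2 - (a*c/2)^2/x^2)) (Ioi (0:ℝ)) :=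
    (glasser'_integrable hb).const_mul _
  exact hint.congr_fun (fun x hx => (sub_key ha x hx).symm) measurableSet_Ioi

lemma fermi_hasSum {x : ℝ} (hx : 0 < x) :
    HasSum (fun j : ℕ => (-1:ℝ)^j * Real.exp (-(((j:ℝ)+1) * x)))
      (1/(Real.exp x + 1)) := by
  have hr : ‖-Real.exp (-x)‖ < 1 := by
    rw [norm_neg, Real.norm_eq_abs, abs_of_pos (Real.exp_pos _)]
    exact Real.exp_lt_one_iff.2 (by linarith)
  have h := (hasSum_geometric_of_norm_lt_one hr).mul_left (Real.exp (-x))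
  have hprod : Real.exp (-x) * Real.exp x = 1 := by rw [← Real.exp_add]; simp
  have hval : Real.exp (-x) * (1 - -Real.exp (-x))⁻¹ = 1/(Real.exp x + 1) := by
    rw [sub_neg_eq_add]
    have h1 : (1 + Real.exp (-x)) ≠ 0 := by positivity
    have h2 : (Real.exp x + 1) ≠ 0 := by positivity
    field_simp
    nlinarith [hprod]
  rw [hval] at h
  refine h.congr_fun fun j => ?_
  rw [neg_pow (Real.exp (-x)) j, ← Real.exp_nat_mul, mul_left_comm, ← Real.exp_add]
  congr 2
  push_cast
  ring

lemma bose_hasSum {x : ℝ} (hx : 0 < x) :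
    HasSum (fun j : ℕ => Real.exp (-(((j:ℝ)+1) * x)))
      (1/(Real.exp x - 1)) := by
  have hr0 : (0:ℝ) < Real.exp (-x) := Real.exp_pos _
  have hr : ‖Real.exp (-x)‖ < 1 := by
    rw [Real.norm_eq_abs, abs_of_pos hr0]
    exact Real.exp_lt_one_iff.2 (by linarith)
  have h := (hasSum_geometric_of_norm_lt_one hr).mul_left (Real.exp (-x))
  have h1x : (1:ℝ) < Real.exp x := by
    calc (1:ℝ) = Real.exp 0 := (Real.exp_zero).symm
    _ < Real.exp x := Real.exp_lt_exp.2 hx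
  have hprod : Real.exp (-x) * Real.exp x = 1 := by rw [← Real.exp_add]; simp
  have hrx1 : Real.exp (-x) < 1 := Real.exp_lt_one_iff.2 (by linarith)
  have hval : Real.exp (-x) * (1 - Real.exp (-x))⁻¹ = 1/(Real.exp x - 1) := by
    have h1 : (1 - Real.exp (-x)) ≠ 0 := by linarith
    have h2 : (Real.exp x - 1) ≠ 0 := by linarith
    field_simp
    nlinarith [hprod]
  rw [hval] at h
  refine h.congr_fun fun j => ?_
  rw [← Real.exp_nat_mul, ← Real.exp_add]
  congr 1
  push_cast
  ring

set_option maxHeartbeats 1000000 in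
lemma summable_kernel_abs {t a : ℝ} (ht : 0 < t) :
    Summable (fun j : ℕ => ((j:ℝ)+1) * Real.exp (-((j:ℝ)+1)^2/(4*t) + ((j:ℝ)+1)*a)) := by
  have hq : ‖Real.exp (-1:ℝ)‖ < 1 := by
    rw [Real.norm_eq_abs, abs_of_pos (Real.exp_pos _)]
    exact Real.exp_lt_one_iff.2 (by norm_num)
  have h0 : Summable (fun j : ℕ => (j:ℝ) * Real.exp (-1:ℝ) ^ j) := by
    simpa using summable_pow_mul_geometric_of_norm_lt_one 1 hq
  have h1 : Summable (fun j : ℕ => ((j+1:ℕ):ℝ) * Real.exp (-1:ℝ) ^ (j+1)) :=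
    (summable_nat_add_iff 1).2 h0
  have h2 : Summable (fun j : ℕ => Real.exp (t*(a+1)^2) *
      (((j+1:ℕ):ℝ) * Real.exp (-1:ℝ) ^ (j+1))) := h1.mul_left _
  refine h2.of_nonneg_of_le (fun j => by positivity) (fun j => ?_)
  have hu : (0:ℝ) ≤ (j:ℝ)+1 := by positivity
  have hpow : Real.exp (-1:ℝ) ^ (j+1) = Real.exp (-((j:ℝ)+1)) := by
    rw [← Real.exp_nat_mul]
    push_cast
    ring_nf
  rw [hpow]
  push_cast
  rw [mul_comm (Real.exp (t*(a+1)^2)), mul_assoc]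
  refine mul_le_mul_of_nonneg_left ?_ hu
  rw [← Real.exp_add]
  apply Real.exp_le_exp.2
  rw [← sub_nonneg]
  have h4t : (0:ℝ) < 4*t := by linarith
  have expand : t*(a+1)^2 + -(((j:ℕ):ℝ)+1) - (-(((j:ℕ):ℝ)+1)^2/(4*t) + (((j:ℕ):ℝ)+1)*a)
      = ((((j:ℕ):ℝ)+1) - 2*t*(a+1))^2 / (4*t) := by
    field_simp
    ring
  have hp : (0:ℝ) ≤ ((((j:ℕ):ℝ)+1) - 2*t*(a+1))^2 / (4*t) := by positivity
  linarith [expand, hp]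

lemma sqrt_four_pi : (4*Real.pi) ^ (-(1:ℝ)/2) * (2 * Real.sqrt π) = 1 := by
  have hπ : (0:ℝ) < π := Real.pi_pos
  have h4π : (0:ℝ) < 4*π := by positivity
  have h1 : (4*Real.pi) ^ (-(1:ℝ)/2) = (Real.sqrt (4*π))⁻¹ := by
    rw [show (-(1:ℝ)/2) = -(1/2 : ℝ) by norm_num, Real.rpow_neg h4π.le,
      ← Real.sqrt_eq_rpow]
  have h2 : Real.sqrt (4*π) = 2 * Real.sqrt π := by
    rw [show (4:ℝ)*π = 2^2*π by norm_num, Real.sqrt_mul (by positivity),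
      Real.sqrt_sq (by norm_num : (0:ℝ) ≤ 2)]
  rw [h1, h2]
  have : (0:ℝ) < Real.sqrt π := Real.sqrt_pos.2 hπ
  field_simp

lemma per_integrand_eq {j : ℕ} {a c : ℝ} (t : ℝ) (ht : t ∈ Ioi (0:ℝ)) :
    (4*Real.pi) ^ (-(1:ℝ)/2) * t ^ (-(3:ℝ)/2) *
        (((j:ℝ)+1) * Real.exp (-((j:ℝ)+1)^2/(4*t) + ((j:ℝ)+1)*a)) * Real.exp (-(c^2)*t)
      = ((4*Real.pi) ^ (-(1:ℝ)/2) * (((j:ℝ)+1) * Real.exp (((j:ℝ)+1)*a))) *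
        (t ^ (-(3:ℝ)/2) * Real.exp (-(((j:ℝ)+1)^2/(4*t)) - c^2*t)) := by
  have hE : Real.exp (-((j:ℝ)+1)^2/(4*t) + ((j:ℝ)+1)*a) * Real.exp (-(c^2)*t)
      = Real.exp (((j:ℝ)+1)*a) * Real.exp (-(((j:ℝ)+1)^2/(4*t)) - c^2*t) := by
    rw [← Real.exp_add, ← Real.exp_add]
    congr 1
    ring
  calc (4*Real.pi) ^ (-(1:ℝ)/2) * t ^ (-(3:ℝ)/2) *
        (((j:ℝ)+1) * Real.exp (-((j:ℝ)+1)^2/(4*t) + ((j:ℝ)+1)*a)) * Real.exp (-(c^2)*t)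
      = (4*Real.pi) ^ (-(1:ℝ)/2) * t ^ (-(3:ℝ)/2) * ((j:ℝ)+1) *
        (Real.exp (-((j:ℝ)+1)^2/(4*t) + ((j:ℝ)+1)*a) * Real.exp (-(c^2)*t)) := by ring
    _ = (4*Real.pi) ^ (-(1:ℝ)/2) * t ^ (-(3:ℝ)/2) * ((j:ℝ)+1) *
        (Real.exp (((j:ℝ)+1)*a) * Real.exp (-(((j:ℝ)+1)^2/(4*t)) - c^2*t)) := by rw [hE]
    _ = ((4*Real.pi) ^ (-(1:ℝ)/2) * (((j:ℝ)+1) * Real.exp (((j:ℝ)+1)*a))) *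
        (t ^ (-(3:ℝ)/2) * Real.exp (-(((j:ℝ)+1)^2/(4*t)) - c^2*t)) := by ring

lemma per_integral {j : ℕ} {a c : ℝ} (hc : 0 < c) :
    ∫ t in Ioi (0:ℝ), (4*Real.pi) ^ (-(1:ℝ)/2) * t ^ (-(3:ℝ)/2) *
        (((j:ℝ)+1) * Real.exp (-((j:ℝ)+1)^2/(4*t) + ((j:ℝ)+1)*a)) * Real.exp (-(c^2)*t)
      = Real.exp (-(((j:ℝ)+1) * (c - a))) := by
  have hj : (0:ℝ) < (j:ℝ)+1 := by positivity
  rw [setIntegral_congr_fun measurableSet_Ioi (per_integrand_eq (j := j) (a := a) (c := c)),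
    integral_const_mul, subordination hj hc]
  have hexp : Real.exp (((j:ℝ)+1)*a) * Real.exp (-(((j:ℝ)+1)*c))
      = Real.exp (-(((j:ℝ)+1)*(c-a))) := by
    rw [← Real.exp_add]
    congr 1
    ring
  calc (4*Real.pi) ^ (-(1:ℝ)/2) * (((j:ℝ)+1) * Real.exp (((j:ℝ)+1)*a)) *
        (2*Real.sqrt π / ((j:ℝ)+1) * Real.exp (-(((j:ℝ)+1)*c)))
      = ((4*Real.pi) ^ (-(1:ℝ)/2) * (2*Real.sqrt π)) *
        (Real.exp (((j:ℝ)+1)*a) * Real.exp (-(((j:ℝ)+1)*c))) * (((j:ℝ)+1)/((j:ℝ)+1)) := by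
        ring
    _ = Real.exp (-(((j:ℝ)+1)*(c-a))) := by
        rw [sqrt_four_pi, hexp, div_self (ne_of_gt hj), one_mul, mul_one]

lemma per_integrable {j : ℕ} {a c : ℝ} (hc : 0 < c) :
    IntegrableOn (fun t => (4*Real.pi) ^ (-(1:ℝ)/2) * t ^ (-(3:ℝ)/2) *
        (((j:ℝ)+1) * Real.exp (-((j:ℝ)+1)^2/(4*t) + ((j:ℝ)+1)*a)) * Real.exp (-(c^2)*t))
      (Ioi (0:ℝ)) := by
  have hj : (0:ℝ) < (j:ℝ)+1 := by positivity
  have h : IntegrableOn (fun t => ((4*Real.pi) ^ (-(1:ℝ)/2) * (((j:ℝ)+1) * Real.exp (((j:ℝ)+1)*a))) *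
      (t ^ (-(3:ℝ)/2) * Real.exp (-(((j:ℝ)+1)^2/(4*t)) - c^2*t))) (Ioi (0:ℝ)) :=
    (subordination_integrable hj hc).const_mul _
  exact h.congr_fun (fun t ht => (per_integrand_eq t ht).symm) measurableSet_Ioi

section MainAux

variable {lam : ℕ → ℝ} {β μ : ℝ}

lemma x_tendsto (hsum : Summable fun k => 1 / (Real.exp (β * (Real.sqrt (lam k) - μ)) + 1)) :
    Tendsto (fun k => β * (Real.sqrt (lam k) - μ)) atTop atTop := by
  set x : ℕ → ℝ := fun k => β * (Real.sqrt (lam k) - μ) with hxdef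
  have h0 : Tendsto (fun k => 1 / (Real.exp (x k) + 1)) atTop (𝓝 0) :=
    hsum.tendsto_atTop_zero
  have h0' : Tendsto (fun k => 1 / (Real.exp (x k) + 1)) atTop (𝓝[>] 0) := by
    rw [tendsto_nhdsWithin_iff]
    exact ⟨h0, Eventually.of_forall fun k => mem_Ioi.2 (by positivity)⟩
  have htop : Tendsto (fun k => Real.exp (x k) + 1) atTop atTop := by
    have := h0'.inv_tendsto_nhdsGT_zero
    refine this.congr fun k => ?_
    rw [Pi.inv_apply, one_div, inv_inv]
  have hetop : Tendsto (fun k => Real.exp (x k)) atTop atTop := by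
    have := htop.atTop_add (tendsto_const_nhds (x := (-1:ℝ)))
    simpa using this
  refine tendsto_atTop.2 fun b => ?_
  filter_upwards [hetop.eventually_ge_atTop (Real.exp b)] with k hk
  exact Real.exp_le_exp.1 hk

lemma summable_bose (hβ : 0 < β) (hμ : ∀ k, μ < Real.sqrt (lam k))
    (hsum : Summable fun k => 1 / (Real.exp (β * (Real.sqrt (lam k) - μ)) + 1)) :
    Summable fun k => 1 / (Real.exp (β * (Real.sqrt (lam k) - μ)) - 1) := by
  set x : ℕ → ℝ := fun k => β * (Real.sqrt (lam k) - μ) with hxdef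
  have hx : ∀ k, 0 < x k := fun k => mul_pos hβ (by linarith [hμ k])
  have h3 : ∀ᶠ k in atTop, (3:ℝ) ≤ Real.exp (x k) := by
    filter_upwards [(x_tendsto hsum).eventually_ge_atTop (Real.log 3)] with k hk
    calc (3:ℝ) = Real.exp (Real.log 3) := by rw [Real.exp_log]; norm_num
    _ ≤ Real.exp (x k) := Real.exp_le_exp.2 hk
  obtain ⟨N, hN⟩ := eventually_atTop.1 h3
  rw [← summable_nat_add_iff N]
  have hg : Summable fun k => 2 * (1 / (Real.exp (x (k + N)) + 1)) :=
    ((summable_nat_add_iff N).2 hsum).mul_left 2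
  refine hg.of_nonneg_of_le (fun k => ?_) (fun k => ?_)
  · have h1 : (1:ℝ) < Real.exp (x (k+N)) := by
      calc (1:ℝ) = Real.exp 0 := Real.exp_zero.symm
      _ < _ := Real.exp_lt_exp.2 (hx _)
    exact le_of_lt (div_pos one_pos (sub_pos.2 h1))
  · have h3k : (3:ℝ) ≤ Real.exp (x (k+N)) := hN (k+N) (Nat.le_add_left N k)
    rw [show 2 * (1 / (Real.exp (x (k + N)) + 1)) = 2 / (Real.exp (x (k+N)) + 1) by ring,
      div_le_div_iff₀ (by linarith) (by linarith)]
    linarith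

lemma summable_heat (hlam : ∀ k, 0 < lam k) (hβ : 0 < β) (hμ : ∀ k, μ < Real.sqrt (lam k))
    (hsum : Summable fun k => 1 / (Real.exp (β * (Real.sqrt (lam k) - μ)) + 1))
    {s : ℝ} (hs : 0 < s) :
    Summable fun k => Real.exp (-s * lam k) := by
  set x : ℕ → ℝ := fun k => β * (Real.sqrt (lam k) - μ) with hxdef
  have hx : ∀ k, 0 < x k := fun k => mul_pos hβ (by linarith [hμ k])
  have hωtop : Tendsto (fun k => Real.sqrt (lam k)) atTop atTop := by
    have h1 := (x_tendsto hsum).atTop_div_const hβ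
    have h2 := tendsto_atTop_add_const_right atTop μ h1
    refine h2.congr fun k => ?_
    field_simp
    ring
  have hev : ∀ᶠ k in atTop, Real.exp (-s * lam k) ≤ 2 * (1 / (Real.exp (x k) + 1)) := by
    filter_upwards [hωtop.eventually_ge_atTop (max 1 (β * (1 + |μ|) / s))] with k hk
    have hω1 : (1:ℝ) ≤ Real.sqrt (lam k) := le_trans (le_max_left _ _) hk
    have hω2 : β * (1 + |μ|) / s ≤ Real.sqrt (lam k) := le_trans (le_max_right _ _) hk
    have hω0 : (0:ℝ) < Real.sqrt (lam k) := by linarith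
    have hωsq : Real.sqrt (lam k) ^ 2 = lam k := Real.sq_sqrt (hlam k).le
    have hkey : x k ≤ s * lam k := by
      rw [← hωsq]
      have h5 : β * (1 + |μ|) ≤ s * Real.sqrt (lam k) := by
        rw [div_le_iff₀ hs] at hω2
        linarith [hω2]
      have h6 : β * (1 + |μ|) * Real.sqrt (lam k) ≤ s * Real.sqrt (lam k) * Real.sqrt (lam k) :=
        mul_le_mul_of_nonneg_right h5 hω0.le
      have h7 : β * (Real.sqrt (lam k) - μ) ≤ β * (1 + |μ|) * Real.sqrt (lam k) := by
        have hμ' : -μ ≤ |μ| := neg_le_abs μ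
        have : Real.sqrt (lam k) - μ ≤ (1 + |μ|) * Real.sqrt (lam k) := by
          nlinarith [abs_nonneg μ]
        nlinarith [hβ.le]
      calc x k ≤ β * (1 + |μ|) * Real.sqrt (lam k) := h7
      _ ≤ s * Real.sqrt (lam k) * Real.sqrt (lam k) := h6
      _ = s * Real.sqrt (lam k) ^ 2 := by ring
    have hexp1 : Real.exp (-s * lam k) ≤ Real.exp (-x k) := by
      apply Real.exp_le_exp.2
      linarith
    have hexp2 : Real.exp (-x k) ≤ 2 / (Real.exp (x k) + 1) := by
      rw [Real.exp_neg, inv_eq_one_div, div_le_div_iff₀ (Real.exp_pos _) (by positivity)]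
      have h1 : (1:ℝ) ≤ Real.exp (x k) := by
        calc (1:ℝ) = Real.exp 0 := Real.exp_zero.symm
        _ ≤ _ := Real.exp_le_exp.2 (hx k).le
      nlinarith
    calc Real.exp (-s * lam k) ≤ Real.exp (-x k) := hexp1
    _ ≤ 2 / (Real.exp (x k) + 1) := hexp2
    _ = 2 * (1 / (Real.exp (x k) + 1)) := by ring
  obtain ⟨N, hN⟩ := eventually_atTop.1 hev
  rw [← summable_nat_add_iff N]
  have hg : Summable fun k => 2 * (1 / (Real.exp (x (k + N)) + 1)) :=
    ((summable_nat_add_iff N).2 hsum).mul_left 2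
  exact hg.of_nonneg_of_le (fun k => (Real.exp_pos _).le)
    (fun k => hN (k+N) (Nat.le_add_left N k))

end MainAux

noncomputable def Hker (a c : ℝ) (j : ℕ) (t : ℝ) : ℝ :=
  (4*Real.pi) ^ (-(1:ℝ)/2) * t ^ (-(3:ℝ)/2) *
    (((j:ℝ)+1) * Real.exp (-((j:ℝ)+1)^2/(4*t) + ((j:ℝ)+1)*a)) * Real.exp (-(c^2)*t)

lemma Hker_int {a c : ℝ} (hc : 0 < c) (j : ℕ) :
    ∫ t in Ioi (0:ℝ), Hker a c j t = Real.exp (-(((j:ℝ)+1) * (c - a))) := by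
  simp only [Hker]
  exact per_integral hc

lemma Hker_integrable {a c : ℝ} (hc : 0 < c) (j : ℕ) :
    IntegrableOn (Hker a c j) (Ioi (0:ℝ)) := by
  exact per_integrable (j := j) (a := a) hc

lemma Hker_nonneg {a c : ℝ} (j : ℕ) {t : ℝ} (ht : 0 < t) : 0 ≤ Hker a c j t := by
  simp only [Hker]
  have h1 : (0:ℝ) ≤ (4*Real.pi) ^ (-(1:ℝ)/2) := Real.rpow_nonneg (by positivity) _
  have h2 : (0:ℝ) ≤ t ^ (-(3:ℝ)/2) := Real.rpow_nonneg ht.le _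
  positivity

lemma Hker_meas (a c : ℝ) (j : ℕ) : Measurable (Hker a c j) := by
  unfold Hker
  fun_prop

lemma Gker_lintegral {a c : ℝ} (hc : 0 < c) (j : ℕ) :
    ∫⁻ t in Ioi (0:ℝ), ‖(-1:ℝ)^j * Hker a c j t‖₊
      = ENNReal.ofReal (Real.exp (-(((j:ℝ)+1) * (c - a)))) := by
  have h1 : ∫⁻ t in Ioi (0:ℝ), ‖(-1:ℝ)^j * Hker a c j t‖₊
      = ∫⁻ t in Ioi (0:ℝ), ENNReal.ofReal (Hker a c j t) := by
    refine setLIntegral_congr_fun measurableSet_Ioi (fun t ht => ?_)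
    rw [← enorm_eq_nnnorm, ← ofReal_norm]
    congr 1
    rw [Real.norm_eq_abs, abs_mul, abs_pow, abs_neg, abs_one, one_pow, one_mul,
      abs_of_nonneg (Hker_nonneg j ht)]
  rw [h1, ← ofReal_integral_eq_lintegral_ofReal (Hker_integrable hc j)
    ((ae_restrict_iff' measurableSet_Ioi).2 (Eventually.of_forall fun t ht => Hker_nonneg j ht)),
    Hker_int hc j]

/-- Heat-trace representation of the fermionic quantum heat trace `Θ_f(β,μ)`:
`Σ_k 1/(e^{β(√λ_k−μ)}+1) = ∫₀^∞ h_f(t,βμ) Σ_k e^{−tβ²λ_k} dt`. -/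
theorem fermionic_quantum_heat_trace (lam : ℕ → ℝ) (hlam : ∀ k, 0 < lam k)
    (β μ : ℝ) (hβ : 0 < β) (hμ : ∀ k, μ < Real.sqrt (lam k))
    (hsum : Summable fun k => 1 / (Real.exp (β * (Real.sqrt (lam k) - μ)) + 1)) :
    (∑' k, 1 / (Real.exp (β * (Real.sqrt (lam k) - μ)) + 1))
      = ∫ t in Set.Ioi (0 : ℝ),
          fermionicKernel t (β * μ) * ∑' k, Real.exp (-(t * β ^ 2) * lam k) := by
  have hω : ∀ k, 0 < Real.sqrt (lam k) := fun k => Real.sqrt_pos.2 (hlam k)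
  have hx : ∀ k, 0 < β * (Real.sqrt (lam k) - μ) := fun k => mul_pos hβ (by linarith [hμ k])
  have hc : ∀ k, 0 < β * Real.sqrt (lam k) := fun k => mul_pos hβ (hω k)
  have hca : ∀ k, β * Real.sqrt (lam k) - β * μ = β * (Real.sqrt (lam k) - μ) :=
    fun k => by ring
  have hbose := summable_bose hβ hμ hsum
  -- summability of the absolute double series
  have hv : Summable (fun p : ℕ × ℕ =>
      Real.exp (-(((p.2:ℝ)+1) * (β * (Real.sqrt (lam p.1) - μ))))) := by
    rw [summable_prod_of_nonneg (fun p => (Real.exp_pos _).le)]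
    constructor
    · intro k
      exact (bose_hasSum (hx k)).summable
    · refine hbose.congr fun k => ?_
      exact ((bose_hasSum (hx k)).tsum_eq).symm
  have hfsum : Summable (fun p : ℕ × ℕ =>
      (-1:ℝ)^p.2 * Real.exp (-(((p.2:ℝ)+1) * (β * (Real.sqrt (lam p.1) - μ))))) := by
    refine Summable.of_abs (hv.congr fun p => ?_)
    rw [abs_mul, abs_pow, abs_neg, abs_one, one_pow, one_mul,
      abs_of_pos (Real.exp_pos _)]
  -- measurability of each term
  have hmeas : ∀ p : ℕ × ℕ, AEStronglyMeasurable
      (fun t => (-1:ℝ)^p.2 * Hker (β*μ) (β*Real.sqrt (lam p.1)) p.2 t)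
      (volume.restrict (Ioi 0)) :=
    fun p => (((Hker_meas _ _ _).const_mul _).aestronglyMeasurable).restrict
  -- finiteness of the sum of lintegrals
  have hfin : ∑' p : ℕ × ℕ, ∫⁻ t in Ioi (0:ℝ),
      ‖(-1:ℝ)^p.2 * Hker (β*μ) (β*Real.sqrt (lam p.1)) p.2 t‖₊ ≠ ⊤ := by
    have heq : ∀ p : ℕ × ℕ, ∫⁻ t in Ioi (0:ℝ),
        ‖(-1:ℝ)^p.2 * Hker (β*μ) (β*Real.sqrt (lam p.1)) p.2 t‖₊
        = ENNReal.ofReal (Real.exp (-(((p.2:ℝ)+1) * (β * (Real.sqrt (lam p.1) - μ))))) := by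
      intro p
      rw [Gker_lintegral (hc p.1) p.2, hca p.1]
    rw [tsum_congr heq, ← ENNReal.ofReal_tsum_of_nonneg (fun p => (Real.exp_pos _).le) hv]
    exact ENNReal.ofReal_ne_top
  -- pointwise factorization of the double sum
  have hfact : ∀ t ∈ Ioi (0:ℝ),
      (∑' p : ℕ × ℕ, (-1:ℝ)^p.2 * Hker (β*μ) (β*Real.sqrt (lam p.1)) p.2 t)
        = fermionicKernel t (β*μ) * ∑' k, Real.exp (-(t * β^2) * lam k) := by
    intro t ht
    have ht0 : (0:ℝ) < t := ht
    have hΘ : Summable (fun k => Real.exp (-(t*β^2) * lam k)) :=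
      summable_heat hlam hβ hμ hsum (by positivity)
    set C : ℝ := (4*Real.pi) ^ (-(1:ℝ)/2) * t ^ (-(3:ℝ)/2) with hCdef
    set Af : ℕ → ℝ := fun j => C * ((-1:ℝ)^j *
      (((j:ℝ)+1) * Real.exp (-((j:ℝ)+1)^2/(4*t) + ((j:ℝ)+1)*(β*μ)))) with hAdef
    set Bf : ℕ → ℝ := fun k => Real.exp (-(t*β^2) * lam k) with hBdef
    have hGf : ∀ p : ℕ × ℕ,
        (-1:ℝ)^p.2 * Hker (β*μ) (β*Real.sqrt (lam p.1)) p.2 t = Bf p.1 * Af p.2 := by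
      intro p
      simp only [Hker, hAdef, hBdef, hCdef]
      rw [show -(t*β^2) * lam p.1 = -((β*Real.sqrt (lam p.1))^2)*t by
        rw [mul_pow, Real.sq_sqrt (hlam p.1).le]; ring]
      ring
    have hAnorm : Summable fun j => ‖Af j‖ := by
      have h0 := (summable_kernel_abs (a := β*μ) ht0).mul_left |C|
      refine h0.congr fun j => ?_
      have hj1 : |((j:ℝ)+1)| = (j:ℝ)+1 := abs_of_nonneg (by positivity)
      simp only [hAdef, Real.norm_eq_abs, abs_mul, abs_pow, abs_neg, abs_one, one_pow,
        one_mul, Real.abs_exp, hj1]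
    have hBnorm : Summable fun k => ‖Bf k‖ := by
      refine hΘ.congr fun k => ?_
      rw [Real.norm_eq_abs, abs_of_pos (Real.exp_pos _)]
    have hmul := tsum_mul_tsum_of_summable_norm hBnorm hAnorm
    calc (∑' p : ℕ × ℕ, (-1:ℝ)^p.2 * Hker (β*μ) (β*Real.sqrt (lam p.1)) p.2 t)
        = ∑' p : ℕ × ℕ, Bf p.1 * Af p.2 := tsum_congr hGf
      _ = (∑' k, Bf k) * (∑' j, Af j) := hmul.symm
      _ = fermionicKernel t (β*μ) * ∑' k, Real.exp (-(t * β^2) * lam k) := by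
          rw [mul_comm]
          congr 1
          simp only [hAdef]
          rw [tsum_mul_left]
          simp only [fermionicKernel, hCdef]
          congr 1
          refine tsum_congr fun j => ?_
          ring
    -- end hfact
  calc (∑' k, 1 / (Real.exp (β * (Real.sqrt (lam k) - μ)) + 1))
      = ∑' k, ∑' j : ℕ, (-1:ℝ)^j *
          Real.exp (-(((j:ℝ)+1) * (β * (Real.sqrt (lam k) - μ)))) :=
        tsum_congr fun k => ((fermi_hasSum (hx k)).tsum_eq).symm
    _ = ∑' p : ℕ × ℕ, (-1:ℝ)^p.2 *
          Real.exp (-(((p.2:ℝ)+1) * (β * (Real.sqrt (lam p.1) - μ)))) :=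
        (Summable.tsum_prod' hfsum (fun k => (hfsum.prod_factor k))).symm
    _ = ∑' p : ℕ × ℕ, ∫ t in Ioi (0:ℝ),
          (-1:ℝ)^p.2 * Hker (β*μ) (β*Real.sqrt (lam p.1)) p.2 t := by
        refine tsum_congr fun p => ?_
        rw [integral_const_mul, Hker_int (hc p.1) p.2, hca p.1]
    _ = ∫ t in Ioi (0:ℝ), ∑' p : ℕ × ℕ,
          (-1:ℝ)^p.2 * Hker (β*μ) (β*Real.sqrt (lam p.1)) p.2 t :=
        (integral_tsum hmeas hfin).symm
    _ = ∫ t in Set.Ioi (0 : ℝ),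
          fermionicKernel t (β * μ) * ∑' k, Real.exp (-(t * β ^ 2) * lam k) :=
        setIntegral_congr_fun measurableSet_Ioi hfact
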